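/- arXiv:1407.2036 — 2 statements merged into one kernel-verified Lean document; each statement's English description precedes it below -/
import Mathlib

section
/- Let T be a clique tree of a finite simple graph G, rooted at a node C_r. For any two incomparable nodes C and C' of T, there is no edge of G between a vertex of V(C) and a vertex of V(C'). -/
/-!
A vertex `x ∈ f(D)` with `D` non-root lies in `D` but not in its parent, so connectivity of the
subtree of cliques containing `x` forces every clique containing `x` to lie below `D`. An edge
`xy` with `x ∈ V(C)` and `y ∈ V(C')` extends to a maximal clique `M`, which therefore lies below
both `C` and `C'`; two ancestors of the same node are comparable.
-/

variable {V : Type*}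

/-- The closed neighborhood `N[x]` of a vertex. -/
def closedNbhd (G : SimpleGraph V) (x : V) : Set V := insert x (G.neighborSet x)

/-- `N[S] = ⋃ x ∈ S, N[x]`. -/
def closedNbhdSet (G : SimpleGraph V) (S : Set V) : Set V := ⋃ x ∈ S, closedNbhd G x

/-- `D` is a dominating set: `N[D] = V`. -/
def IsDomSet (G : SimpleGraph V) (D : Set V) : Prop := closedNbhdSet G D = Set.univ

/-- Minimal dominating set: dominating, and no proper subset dominates. -/
def IsMinDomSet (G : SimpleGraph V) (D : Set V) : Prop :=
  IsDomSet G D ∧ ∀ D' : Set V, D' ⊂ D → ¬ IsDomSet G D'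

/-- Private neighbors of `x` with respect to `D`: `P(D,x) = {y : N[y] ∩ D = {x}}`. -/
def privNbrs (G : SimpleGraph V) (D : Set V) (x : V) : Set V :=
  {y | closedNbhd G y ∩ D = {x}}

/-- Irredundant set: every member has a private neighbor. -/
def IsIrredundant (G : SimpleGraph V) (D : Set V) : Prop :=
  ∀ x ∈ D, (privNbrs G D x).Nonempty

/-- Maximal clique. -/
def IsMaxClique (G : SimpleGraph V) (C : Set V) : Prop :=
  G.IsClique C ∧ ∀ D : Set V, G.IsClique D → C ⊆ D → C = D

/-- The type of maximal cliques of `G`. -/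
abbrev MaxClique (G : SimpleGraph V) := {C : Set V // IsMaxClique G C}

/-- A clique tree of `G`, rooted at `root`: a rooted tree whose nodes are exactly the
maximal cliques of `G` (encoded by a parent function from which every node reaches the
root), such that for each vertex `x` the nodes containing `x` induce a connected
subtree of the tree. -/
structure CliqueTree (G : SimpleGraph V) where
  parent : MaxClique G → MaxClique G
  root : MaxClique G
  parent_root : parent root = root
  reaches_root : ∀ C : MaxClique G, ∃ n : ℕ, parent^[n] C = root
  vertex_subtree : ∀ x : V,
    ((SimpleGraph.fromRel fun C C' : MaxClique G => parent C = C').induce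
      {C : MaxClique G | x ∈ C.1}).Connected

variable {G : SimpleGraph V}

open Classical in
/-- `f(C) := C ∖ Pa(C)` for non-root `C`, and `f(C_r) := C_r`. -/
noncomputable def fC (T : CliqueTree G) (C : MaxClique G) : Set V :=
  if C = T.root then C.1 else C.1 \ (T.parent C).1

/-- `IsAnc T A B` : `A` is an ancestor of `B` (i.e. `B ⪯ A`), namely `A` lies on the
path from the root to `B`. -/
def IsAnc (T : CliqueTree G) (A B : MaxClique G) : Prop :=
  ∃ n : ℕ, T.parent^[n] B = A

/-- `V(C) := ⋃_{C' ⪯ C} f(C')`. -/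
noncomputable def Vsub (T : CliqueTree G) (C : MaxClique G) : Set V :=
  ⋃ C' ∈ {C' : MaxClique G | IsAnc T C C'}, fC T C'

lemma exists_isMaxClique_superset {s : Set V} (hs : G.IsClique s) :
    ∃ M, s ⊆ M ∧ IsMaxClique G M := by
  obtain ⟨M, hsM, hM⟩ := zorn_subset_nonempty {t | G.IsClique t}
    (fun c hc hchain _ => ⟨⋃₀ c, (SimpleGraph.isClique_sUnion hchain.directedOn).mpr hc,
      fun _ => Set.subset_sUnion_of_mem⟩) s hs
  exact ⟨M, hsM, hM.prop, fun D hD hMD => hMD.antisymm (hM.le_of_ge hD hMD)⟩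

lemma exists_maxClique_mem_mem {x y : V} (hxy : G.Adj x y) :
    ∃ M : MaxClique G, x ∈ M.1 ∧ y ∈ M.1 := by
  obtain ⟨M, hxyM, hM⟩ := exists_isMaxClique_superset (SimpleGraph.isClique_pair.mpr fun _ => hxy)
  exact ⟨⟨M, hM⟩, hxyM (by simp), hxyM (by simp)⟩

section

variable {T : CliqueTree G} {A B D : MaxClique G}

lemma isAnc_refl (A : MaxClique G) : IsAnc T A A := ⟨0, rfl⟩

lemma IsAnc.trans (hAB : IsAnc T A B) (hBD : IsAnc T B D) : IsAnc T A D := by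
  obtain ⟨n, rfl⟩ := hAB
  obtain ⟨m, rfl⟩ := hBD
  exact ⟨n + m, Function.iterate_add_apply _ _ _ _⟩

lemma isAnc_of_isAnc_parent (h : IsAnc T A (T.parent B)) : IsAnc T A B :=
  h.trans ⟨1, rfl⟩

lemma IsAnc.parent_of_ne (h : IsAnc T A B) (hne : B ≠ A) : IsAnc T A (T.parent B) := by
  obtain ⟨_ | n, hn⟩ := h
  · exact absurd hn hne
  · exact ⟨n, by rwa [← Function.iterate_succ_apply]⟩

lemma eq_root_of_isAnc_root (h : IsAnc T A T.root) : A = T.root := by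
  obtain ⟨n, hn⟩ := h
  rwa [Function.iterate_fixed T.parent_root, eq_comm] at hn

lemma IsAnc.total_of_isAnc (hA : IsAnc T A D) (hB : IsAnc T B D) : IsAnc T A B ∨ IsAnc T B A := by
  obtain ⟨n, rfl⟩ := hA
  obtain ⟨m, hm⟩ := hB
  rcases le_total n m with h | h
  · exact .inr ⟨m - n, by rw [← Function.iterate_add_apply, Nat.sub_add_cancel h, hm]⟩
  · exact .inl ⟨n - m, by rw [← hm, ← Function.iterate_add_apply, Nat.sub_add_cancel h]⟩

lemma isAnc_of_mem_of_not_mem_parent {x : V} (hxD : x ∈ D.1) (hxP : x ∉ (T.parent D).1)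
    (hxB : x ∈ B.1) : IsAnc T D B := by
  have hreach := (SimpleGraph.reachable_iff_reflTransGen _ _).mp <|
    (T.vertex_subtree x).preconnected ⟨D, hxD⟩ ⟨B, hxB⟩
  change IsAnc T D (⟨B, hxB⟩ : {C : MaxClique G | x ∈ C.1}).1
  generalize (⟨B, hxB⟩ : {C : MaxClique G | x ∈ C.1}) = b at hreach ⊢
  induction hreach with
  | refl => exact isAnc_refl D
  | @tail u v _ huv ih =>
    simp only [SimpleGraph.comap_adj, Function.Embedding.subtype_apply,
      SimpleGraph.fromRel_adj] at huv
    rcases huv.2 with hup | hvp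
    · have hu : u.1 ≠ D := by rintro rfl; exact hxP (hup ▸ v.2)
      exact hup ▸ ih.parent_of_ne hu
    · exact isAnc_of_isAnc_parent (hvp ▸ ih)

lemma exists_mem_not_mem_parent_of_mem_vsub {x : V} (hx : x ∈ Vsub T A) (hA : A ≠ T.root) :
    ∃ D, IsAnc T A D ∧ x ∈ D.1 ∧ x ∉ (T.parent D).1 := by
  simp only [Vsub, Set.mem_iUnion] at hx
  obtain ⟨D, hAD, hxD⟩ := hx
  have hD : D ≠ T.root := by
    rintro rfl
    exact hA (eq_root_of_isAnc_root hAD)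
  rw [fC, if_neg hD] at hxD
  exact ⟨D, hAD, hxD⟩

lemma isAnc_of_mem_vsub_of_mem {x : V} (hx : x ∈ Vsub T A) (hA : A ≠ T.root) (hxB : x ∈ B.1) :
    IsAnc T A B := by
  obtain ⟨D, hAD, hxD, hxP⟩ := exists_mem_not_mem_parent_of_mem_vsub hx hA
  exact hAD.trans (isAnc_of_mem_of_not_mem_parent hxD hxP hxB)

end

theorem stmt4_general {V : Type*} (G : SimpleGraph V) (T : CliqueTree G)
    (C C' : MaxClique G) (h1 : ¬ IsAnc T C C') (h2 : ¬ IsAnc T C' C) :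
    ∀ x ∈ Vsub T C, ∀ y ∈ Vsub T C', ¬ G.Adj x y := by
  intro x hx y hy hxy
  have hC : C ≠ T.root := by rintro rfl; exact h1 (T.reaches_root C')
  have hC' : C' ≠ T.root := by rintro rfl; exact h2 (T.reaches_root C)
  obtain ⟨M, hxM, hyM⟩ := exists_maxClique_mem_mem hxy
  rcases (isAnc_of_mem_vsub_of_mem hx hC hxM).total_of_isAnc
      (isAnc_of_mem_vsub_of_mem hy hC' hyM) with h | h
  · exact h1 h
  · exact h2 h

/-- For incomparable nodes `C`, `C'` of the clique tree there is no edge between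
`V(C)` and `V(C')`. -/
theorem stmt4 {V : Type*} [Fintype V] (G : SimpleGraph V) (T : CliqueTree G)
    (C C' : MaxClique G) (h1 : ¬ IsAnc T C C') (h2 : ¬ IsAnc T C' C) :
    ∀ x ∈ Vsub T C, ∀ y ∈ Vsub T C', ¬ G.Adj x y :=
  stmt4_general G T C C' h1 h2
end

section
/- Let T be a clique tree of a finite simple graph G, rooted at a node C_r. Let D ⊆ V_G and let x ∈ D, and suppose that the node C(x) contains a vertex w ∈ D with w ≠ x. Then every private neighbor of x with respect to D lies in V(C(x)), i.e., P(D,x) ⊆ V(C(x)). -/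
variable {V : Type*}

variable {G : SimpleGraph V}

/-!
A private neighbour `y ≠ x` of `x` is adjacent to `x`, so some node of the clique tree contains
both. Walking from that node towards the root, each vertex `v` stays in every node until `C(v)`
is reached. If `C(x)` comes no later than `C(y)`, then `y ∈ C(x)` is adjacent to `w ∈ D`,
contradicting privacy; otherwise `C(x)` is an ancestor of `C(y)`, and `y ∈ f(C(y)) ⊆ V(C(x))`.
-/

lemma exists_maxClique_superset {s : Set V} (hs : G.IsClique s) :
    ∃ C : MaxClique G, s ⊆ C.1 := by
  obtain ⟨C, hsC, hC⟩ := zorn_subset_nonempty {t : Set V | G.IsClique t}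
    (fun c hc hchain _ => ⟨⋃₀ c, (G.isClique_sUnion hchain.directedOn).2 hc,
      fun _ => Set.subset_sUnion_of_mem⟩) s hs
  exact ⟨⟨C, hC.prop, fun t ht hCt => hCt.antisymm (hC.le_of_ge ht hCt)⟩, hsC⟩

lemma mem_closedNbhd_of_isClique {s : Set V} (hs : G.IsClique s) {y z : V}
    (hy : y ∈ s) (hz : z ∈ s) : z ∈ closedNbhd G y := by
  obtain rfl | hyz := eq_or_ne y z
  · exact Set.mem_insert _ _
  · exact Set.mem_insert_of_mem _ (hs hy hz hyz)

section PrivNbrs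

variable {D : Set V} {x y : V}

lemma mem_closedNbhd_of_mem_privNbrs (hy : y ∈ privNbrs G D x) : x ∈ closedNbhd G y :=
  (hy.symm ▸ Set.mem_singleton x : x ∈ closedNbhd G y ∩ D).1

lemma eq_of_mem_privNbrs (hy : y ∈ privNbrs G D x) {z : V} (hzy : z ∈ closedNbhd G y)
    (hzD : z ∈ D) : z = x :=
  (hy ▸ ⟨hzy, hzD⟩ : z ∈ ({x} : Set V))

end PrivNbrs

namespace CliqueTree

variable (T : CliqueTree G) {Cx : V → MaxClique G}

lemma exists_iterate_parent_eq (hCx : ∀ (v : V) (C : MaxClique G), v ∈ fC T C ↔ C = Cx v)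
    {v : V} {C : MaxClique G} (hv : v ∈ C.1) :
    ∃ k, T.parent^[k] C = Cx v ∧ ∀ j ≤ k, v ∈ (T.parent^[j] C).1 := by
  obtain ⟨n, hn⟩ := T.reaches_root C
  induction n generalizing C with
  | zero =>
    refine ⟨0, (hCx v C).1 ?_, fun j hj => by simpa [Nat.le_zero.1 hj] using hv⟩
    simpa [fC, show C = T.root from hn] using hv
  | succ n ih =>
    by_cases hCv : C = Cx v
    · exact ⟨0, hCv, fun j hj => by simpa [Nat.le_zero.1 hj] using hv⟩
    have hvp : v ∈ (T.parent C).1 := by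
      by_contra hvp
      refine hCv ((hCx v C).1 ?_)
      unfold fC
      split_ifs
      exacts [hv, ⟨hv, hvp⟩]
    obtain ⟨k, hk, hmem⟩ := ih hvp hn
    refine ⟨k + 1, hk, fun j hj => ?_⟩
    cases j with
    | zero => exact hv
    | succ j => exact hmem j (Nat.succ_le_succ_iff.1 hj)

lemma mem_Vsub_of_isAnc (hCx : ∀ (v : V) (C : MaxClique G), v ∈ fC T C ↔ C = Cx v)
    {C : MaxClique G} {v : V} (hanc : IsAnc T C (Cx v)) : v ∈ Vsub T C :=
  Set.mem_biUnion hanc ((hCx v (Cx v)).2 rfl)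

end CliqueTree

theorem stmt6_general {V : Type*} (G : SimpleGraph V) (T : CliqueTree G)
    (Cx : V → MaxClique G) (hCx : ∀ (v : V) (C : MaxClique G), v ∈ fC T C ↔ C = Cx v)
    (D : Set V) (x : V)
    (w : V) (hw : w ∈ D) (hwx : w ≠ x) (hwC : w ∈ (Cx x).1) :
    privNbrs G D x ⊆ Vsub T (Cx x) := by
  intro y hy
  obtain rfl | hyx := eq_or_ne y x
  · exact T.mem_Vsub_of_isAnc hCx ⟨0, rfl⟩
  have hadj : G.Adj x y := by
    simpa [closedNbhd, hyx.symm, G.adj_comm] using mem_closedNbhd_of_mem_privNbrs hy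
  obtain ⟨C, hxyC⟩ := exists_maxClique_superset (G.isClique_pair.2 fun _ => hadj)
  obtain ⟨m, hm, -⟩ := T.exists_iterate_parent_eq hCx (hxyC (Set.mem_insert x {y}))
  obtain ⟨k, hk, hyk⟩ := T.exists_iterate_parent_eq hCx (hxyC (Set.mem_insert_of_mem x rfl))
  rcases le_or_gt m k with hmk | hkm
  · have hyCx : y ∈ (Cx x).1 := hm ▸ hyk m hmk
    exact absurd (eq_of_mem_privNbrs hy
      (mem_closedNbhd_of_isClique (Cx x).2.1 hyCx hwC) hw) hwx
  · refine T.mem_Vsub_of_isAnc hCx ⟨m - k, ?_⟩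
    rw [← hk, ← Function.iterate_add_apply, Nat.sub_add_cancel hkm.le, hm]

/-- If `x ∈ D` and the node `C(x)` contains some `w ∈ D` with `w ≠ x`, then every
private neighbor of `x` w.r.t. `D` lies in `V(C(x))`. -/
theorem stmt6 {V : Type*} [Fintype V] (G : SimpleGraph V) (T : CliqueTree G)
    (Cx : V → MaxClique G) (hCx : ∀ (v : V) (C : MaxClique G), v ∈ fC T C ↔ C = Cx v)
    (D : Set V) (x : V) (hx : x ∈ D)
    (w : V) (hw : w ∈ D) (hwx : w ≠ x) (hwC : w ∈ (Cx x).1) :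
    privNbrs G D x ⊆ Vsub T (Cx x) :=
  stmt6_general G T Cx hCx D x w hw hwx hwC
end
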